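/- arXiv:math/0606111 — 2 statements merged into one kernel-verified Lean document; each statement's English description precedes it below -/
import Mathlib

section
/- Define the tilesets T_k = closure(C_{k-1} \ C_k) for k ≥ 1. Then each T_k is the closure of its interior. -/
/-!
Every `C k` is compact and contained in the closure of its interior: for `C 0 = conv F` this is
convexity with nonempty interior, and the property passes through finite unions of images under
maps that are open and continuous, as bijective affine maps of `ℝ^d` are. Removing a closed set
from a set with this property preserves it, so `C k \ C (k + 1)` has it, and then its closure is
the closure of its own interior.
-/

open Set

section ClosureInterior

variable {X Y : Type*} [TopologicalSpace X] [TopologicalSpace Y]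

theorem closure_eq_closure_interior_closure_of_subset {s : Set X}
    (hs : s ⊆ closure (interior s)) : closure s = closure (interior (closure s)) :=
  Subset.antisymm
    (closure_minimal (hs.trans (closure_mono (interior_mono subset_closure))) isClosed_closure)
    ((closure_mono interior_subset).trans closure_closure.subset)

theorem diff_subset_closure_interior_diff {s t : Set X} (hs : s ⊆ closure (interior s))
    (ht : IsClosed t) : s \ t ⊆ closure (interior (s \ t)) := by
  rintro x ⟨hxs, hxt⟩
  have hx : x ∈ closure (tᶜ ∩ interior s) := ht.isOpen_compl.inter_closure ⟨hxt, hs hxs⟩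
  refine closure_mono (interior_maximal ?_ (ht.isOpen_compl.inter isOpen_interior)) hx
  exact fun y ⟨hyt, hys⟩ => ⟨interior_subset hys, hyt⟩

theorem IsOpenMap.image_subset_closure_interior_image {f : X → Y} (hf : IsOpenMap f)
    (hc : Continuous f) {s : Set X} (hs : s ⊆ closure (interior s)) :
    f '' s ⊆ closure (interior (f '' s)) :=
  calc f '' s ⊆ f '' closure (interior s) := image_mono hs
    _ ⊆ closure (f '' interior s) := image_closure_subset_closure_image hc
    _ ⊆ closure (interior (f '' s)) := closure_mono (hf.image_interior_subset s)

theorem iUnion_subset_closure_interior_iUnion {ι : Sort*} {s : ι → Set X}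
    (hs : ∀ i, s i ⊆ closure (interior (s i))) :
    ⋃ i, s i ⊆ closure (interior (⋃ i, s i)) :=
  iUnion_subset fun i => (hs i).trans (closure_mono (interior_mono (subset_iUnion s i)))

end ClosureInterior

section ConvexHull

variable {E : Type*} [NormedAddCommGroup E] [NormedSpace ℝ E]

theorem convexHull_range_eq_image_stdSimplex {ι : Type*} [Fintype ι] (v : ι → E) :
    convexHull ℝ (range v) = (fun w : ι → ℝ => ∑ i, w i • v i) '' stdSimplex ℝ ι := by
  classical
  have hv : range v = Fintype.linearCombination ℝ v ''
      range fun i j : ι => if i = j then (1 : ℝ) else 0 := by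
    rw [← range_comp]
    congr 1
    funext i
    simp [Fintype.linearCombination_apply, ite_smul]
  rw [← convexHull_basis_eq_stdSimplex, hv, ← LinearMap.image_convexHull]
  rfl

/-- Carathéodory: a point of `convexHull ℝ s` is a convex combination of `finrank ℝ E + 1`
points of `s`, so the hull is a continuous image of a simplex times a power of `s`. -/
theorem IsCompact.convexHull [FiniteDimensional ℝ E] {s : Set E} (hs : IsCompact s) :
    IsCompact (_root_.convexHull ℝ s) := by
  set n := Module.finrank ℝ E + 1
  let combine : (Fin n → ℝ) × (Fin n → E) → E := fun p => ∑ i, p.1 i • p.2 i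
  suffices h : _root_.convexHull ℝ s = combine '' (stdSimplex ℝ (Fin n) ×ˢ univ.pi fun _ => s) by
    rw [h]
    refine ((isCompact_stdSimplex ℝ _).prod (isCompact_univ_pi fun _ => hs)).image ?_
    fun_prop
  refine Subset.antisymm ?_ ?_
  · intro x hx
    rw [convexHull_eq_union] at hx
    simp only [mem_iUnion] at hx
    obtain ⟨t, hts, hindep, hxt⟩ := hx
    have : Nonempty t := (convexHull_nonempty_iff.mp ⟨x, hxt⟩).to_subtype
    have hcard : Fintype.card t ≤ Fintype.card (Fin n) := by
      simpa [n] using hindep.card_le_finrank_succ.trans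
        (Nat.succ_le_succ (Submodule.finrank_le _))
    obtain ⟨e⟩ := Function.Embedding.nonempty_of_card_le hcard
    set v : Fin n → E := Subtype.val ∘ Function.invFun e
    have hv : range v = t := by
      rw [range_comp, (Function.invFun_surjective e.injective).range_eq, image_univ,
        Subtype.range_coe]
    rw [← hv, convexHull_range_eq_image_stdSimplex] at hxt
    obtain ⟨w, hw, rfl⟩ := hxt
    exact ⟨(w, v), ⟨hw, fun i _ => hts (Subtype.coe_prop _)⟩, rfl⟩
  · rintro _ ⟨⟨w, v⟩, ⟨hw, hv⟩, rfl⟩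
    have hrange : range v ⊆ s := range_subset_iff.mpr fun i => hv i (mem_univ i)
    exact convexHull_mono hrange <|
      (convexHull_range_eq_image_stdSimplex v).symm ▸ mem_image_of_mem _ hw

end ConvexHull

theorem stmt10_general (d J : ℕ)
    (Φ : Fin J → (EuclideanSpace ℝ (Fin d) →ᵃ[ℝ] EuclideanSpace ℝ (Fin d)))
    (F : Set (EuclideanSpace ℝ (Fin d)))
    (hFc : IsCompact F)
    (hbij : ∀ j, Function.Bijective (Φ j))
    (C : ℕ → Set (EuclideanSpace ℝ (Fin d)))
    (hC0 : C 0 = convexHull ℝ F)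
    (hCsucc : ∀ k, C (k + 1) = ⋃ j, (Φ j) '' C k)
    (hnt : (interior (convexHull ℝ F)).Nonempty) :
    ∀ k, closure (C k \ C (k + 1)) =
      closure (interior (closure (C k \ C (k + 1)))) := by
  have hcont j : Continuous (Φ j) := (Φ j).continuous_of_finiteDimensional
  have hopen j : IsOpenMap (Φ j) := AffineMap.isOpenMap_linear_iff.mp <|
    (Φ j).linear.isOpenMap_of_finiteDimensional ((Φ j).linear_surjective_iff.mpr (hbij j).2)
  have hcompact k : IsCompact (C k) := by
    induction k with
    | zero => exact hC0 ▸ hFc.convexHull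
    | succ k ih => exact hCsucc k ▸ isCompact_iUnion fun j => ih.image (hcont j)
  have hreg k : C k ⊆ closure (interior (C k)) := by
    induction k with
    | zero =>
      rw [hC0, (convex_convexHull ℝ F).closure_interior_eq_closure_of_nonempty_interior hnt]
      exact subset_closure
    | succ k ih =>
      exact hCsucc k ▸ iUnion_subset_closure_interior_iUnion fun j =>
        (hopen j).image_subset_closure_interior_image (hcont j) ih
  intro k
  exact closure_eq_closure_interior_closure_of_subset
    (diff_subset_closure_interior_diff (hreg k) (hcompact (k + 1)).isClosed)

theorem stmt10 (d J : ℕ)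
    (Φ : Fin J → (EuclideanSpace ℝ (Fin d) →ᵃ[ℝ] EuclideanSpace ℝ (Fin d)))
    (r : Fin J → NNReal) (hr : ∀ j, r j < 1)
    (hlip : ∀ j, LipschitzWith (r j) (Φ j))
    (F : Set (EuclideanSpace ℝ (Fin d)))
    (hFne : F.Nonempty) (hFc : IsCompact F)
    (hFinv : F = ⋃ j, (Φ j) '' F)
    (hbij : ∀ j, Function.Bijective (Φ j))
    (C : ℕ → Set (EuclideanSpace ℝ (Fin d)))
    (hC0 : C 0 = convexHull ℝ F)
    (hCsucc : ∀ k, C (k + 1) = ⋃ j, (Φ j) '' C k)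
    (hnt : (interior (convexHull ℝ F)).Nonempty)
    (hnontrivial : C 1 ≠ C 0)
    (hts : ∀ j ℓ, j ≠ ℓ → interior ((Φ j) '' convexHull ℝ F) ∩ interior ((Φ ℓ) '' convexHull ℝ F) = ∅) :
    ∀ k, closure (C k \ C (k + 1)) =
      closure (interior (closure (C k \ C (k + 1)))) :=
  stmt10_general d J Φ F hFc hbij C hC0 hCsucc hnt
end

section
/- No tile intersects the attractor: for every word w and generator G_q, Φ_w(G_q) ∩ F = ∅. -/
open Set

noncomputable def wordMap {d J : ℕ}
    (Φ : Fin J → (EuclideanSpace ℝ (Fin d) →ᵃ[ℝ] EuclideanSpace ℝ (Fin d))) :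
    List (Fin J) → (EuclideanSpace ℝ (Fin d) → EuclideanSpace ℝ (Fin d))
  | [] => id
  | j :: w => (Φ j) ∘ wordMap Φ w

/-!
Induct on the word, carrying two invariants of the image `T` of `G`: `T ⊆ int(conv F)` and
`T ∩ F = ∅`. The first is preserved since each `Φ j` is an open map with `Φ j (conv F) ⊆ conv F`.
For the second, a point `Φ j z` of `F` is `Φ ℓ y` with `y ∈ F`. If `ℓ = j`, injectivity gives
`z = y ∈ F`. If `ℓ ≠ j`, then `Φ j z ∈ int(Φ j (conv F))` is a point of the convex body
`Φ ℓ (conv F)`, so the open set `int(Φ j (conv F))` meets `int(Φ ℓ (conv F))`, which the tileset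
condition forbids.
-/

section TopologicalVectorSpace

variable {E : Type*} [AddCommGroup E] [Module ℝ E] {F : Set E}

theorem AffineMap.image_convexHull_subset {f : E →ᵃ[ℝ] E} (hf : f '' F ⊆ F) :
    f '' convexHull ℝ F ⊆ convexHull ℝ F := by
  rw [AffineMap.image_convexHull]
  exact convexHull_mono hf

variable [TopologicalSpace E]

theorem AffineMap.image_interior_convexHull_subset {f : E →ᵃ[ℝ] E} (hf : f '' F ⊆ F)
    (hopen : IsOpenMap f) : f '' interior (convexHull ℝ F) ⊆ interior (convexHull ℝ F) :=
  (hopen.image_interior_subset _).trans (interior_mono (f.image_convexHull_subset hf))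

variable [IsTopologicalAddGroup E] [ContinuousSMul ℝ E]

theorem Convex.inter_interior_nonempty_of_isOpen {K U : Set E} (hK : Convex ℝ K)
    (hKint : (interior K).Nonempty) (hU : IsOpen U) (hUK : (U ∩ K).Nonempty) :
    (U ∩ interior K).Nonempty := by
  obtain ⟨x, hxU, hxK⟩ := hUK
  have hx : x ∈ closure (interior K) := by
    rw [hK.closure_interior_eq_closure_of_nonempty_interior hKint]
    exact subset_closure hxK
  exact mem_closure_iff.1 hx U hU hxU

theorem image_inter_eq_empty_of_tileset {ι : Type*} {Φ : ι → E →ᵃ[ℝ] E}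
    (hF : F ⊆ ⋃ ℓ, Φ ℓ '' F) (hopen : ∀ ℓ, IsOpenMap (Φ ℓ)) {j : ι}
    (hinj : Function.Injective (Φ j))
    (hts : ∀ j ℓ, j ≠ ℓ →
      interior (Φ j '' convexHull ℝ F) ∩ interior (Φ ℓ '' convexHull ℝ F) = ∅)
    {T : Set E} (hT : T ⊆ interior (convexHull ℝ F)) (hTF : T ∩ F = ∅) :
    Φ j '' T ∩ F = ∅ := by
  refine eq_empty_iff_forall_notMem.2 ?_
  rintro _ ⟨⟨z, hzT, rfl⟩, hxF⟩
  obtain ⟨ℓ, y, hyF, hyx⟩ := mem_iUnion.1 (hF hxF)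
  rcases eq_or_ne j ℓ with rfl | hjℓ
  · obtain rfl := hinj hyx
    exact hTF.subset ⟨hzT, hyF⟩
  · have hxj : Φ j z ∈ interior (Φ j '' convexHull ℝ F) :=
      (hopen j).image_interior_subset _ ⟨z, hT hzT, rfl⟩
    have hℓint : (interior (Φ ℓ '' convexHull ℝ F)).Nonempty :=
      ⟨_, (hopen ℓ).image_interior_subset _ ⟨z, hT hzT, rfl⟩⟩
    obtain ⟨q, hq⟩ := ((convex_convexHull ℝ F).affine_image (Φ ℓ)).inter_interior_nonempty_of_isOpen
      hℓint isOpen_interior ⟨Φ j z, hxj, y, subset_convexHull ℝ F hyF, hyx⟩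
    exact (hts j ℓ hjℓ).subset hq

end TopologicalVectorSpace

theorem wordMap_image_subset_interior_convexHull_and_inter_eq_empty {d J : ℕ}
    {Φ : Fin J → (EuclideanSpace ℝ (Fin d) →ᵃ[ℝ] EuclideanSpace ℝ (Fin d))}
    {F : Set (EuclideanSpace ℝ (Fin d))} (hFinv : F = ⋃ j, (Φ j) '' F)
    (hbij : ∀ j, Function.Bijective (Φ j))
    (hts : ∀ j ℓ, j ≠ ℓ →
      interior ((Φ j) '' convexHull ℝ F) ∩ interior ((Φ ℓ) '' convexHull ℝ F) = ∅)
    {T : Set (EuclideanSpace ℝ (Fin d))} (hT : T ⊆ interior (convexHull ℝ F)) (hTF : T ∩ F = ∅)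
    (w : List (Fin J)) :
    wordMap Φ w '' T ⊆ interior (convexHull ℝ F) ∧ wordMap Φ w '' T ∩ F = ∅ := by
  have hΦF : ∀ j, Φ j '' F ⊆ F := fun j =>
    (subset_iUnion (fun j => Φ j '' F) j).trans hFinv.symm.subset
  have hopen : ∀ j, IsOpenMap (Φ j) := fun j =>
    (Φ j).isOpenMap (Φ j).continuous_of_finiteDimensional (hbij j).2
  induction w with
  | nil => simpa [wordMap] using ⟨hT, hTF⟩
  | cons j w ih =>
    rw [wordMap, image_comp]
    exact ⟨(image_mono ih.1).trans ((Φ j).image_interior_convexHull_subset (hΦF j) (hopen j)),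
      image_inter_eq_empty_of_tileset hFinv.subset hopen (hbij j).1 hts ih.1 ih.2⟩

theorem stmt18_general (d J : ℕ)
    (Φ : Fin J → (EuclideanSpace ℝ (Fin d) →ᵃ[ℝ] EuclideanSpace ℝ (Fin d)))
    (F : Set (EuclideanSpace ℝ (Fin d)))
    (hFinv : F = ⋃ j, (Φ j) '' F)
    (hbij : ∀ j, Function.Bijective (Φ j))
    (C : ℕ → Set (EuclideanSpace ℝ (Fin d)))
    (hC0 : C 0 = convexHull ℝ F)
    (hCsucc : ∀ k, C (k + 1) = ⋃ j, (Φ j) '' C k)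
    (hts : ∀ j ℓ, j ≠ ℓ → interior ((Φ j) '' convexHull ℝ F) ∩ interior ((Φ ℓ) '' convexHull ℝ F) = ∅) :
    ∀ G : Set (EuclideanSpace ℝ (Fin d)), G ⊆ interior (C 0 \ C 1) →
      ∀ w : List (Fin J), wordMap Φ w '' G ∩ F = ∅ := by
  intro G hG w
  have hFC1 : F ⊆ C 1 := by
    rw [hCsucc 0, hC0]
    nth_rw 1 [hFinv]
    exact iUnion_mono fun j => image_mono (subset_convexHull ℝ F)
  have hGint : G ⊆ interior (convexHull ℝ F) := hC0 ▸ hG.trans (interior_mono sdiff_subset)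
  have hGF : G ∩ F = ∅ :=
    eq_empty_iff_forall_notMem.2 fun x ⟨hxG, hxF⟩ => (interior_subset (hG hxG)).2 (hFC1 hxF)
  exact (wordMap_image_subset_interior_convexHull_and_inter_eq_empty hFinv hbij hts hGint hGF w).2

theorem stmt18 (d J : ℕ)
    (Φ : Fin J → (EuclideanSpace ℝ (Fin d) →ᵃ[ℝ] EuclideanSpace ℝ (Fin d)))
    (r : Fin J → NNReal) (hr : ∀ j, r j < 1)
    (hlip : ∀ j, LipschitzWith (r j) (Φ j))
    (F : Set (EuclideanSpace ℝ (Fin d)))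
    (hFne : F.Nonempty) (hFc : IsCompact F)
    (hFinv : F = ⋃ j, (Φ j) '' F)
    (hbij : ∀ j, Function.Bijective (Φ j))
    (C : ℕ → Set (EuclideanSpace ℝ (Fin d)))
    (hC0 : C 0 = convexHull ℝ F)
    (hCsucc : ∀ k, C (k + 1) = ⋃ j, (Φ j) '' C k)
    (hts : ∀ j ℓ, j ≠ ℓ → interior ((Φ j) '' convexHull ℝ F) ∩ interior ((Φ ℓ) '' convexHull ℝ F) = ∅) :
    ∀ G : Set (EuclideanSpace ℝ (Fin d)), G ⊆ interior (C 0 \ C 1) →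
      ∀ w : List (Fin J), wordMap Φ w '' G ∩ F = ∅ :=
  stmt18_general d J Φ F hFinv hbij C hC0 hCsucc hts
end
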